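/- In the ring R = ℤ[y,z] / (y − y² − z² − y²z + z³ + y³z), the ideals generated by {y, z−1} and by {y³, z³} are comaximal, i.e. their sum is the unit ideal. -/
import Mathlib


open MvPolynomial

noncomputable abbrev yP : MvPolynomial (Fin 2) ℤ := X 0
noncomputable abbrev zP : MvPolynomial (Fin 2) ℤ := X 1

/-- Defining equation of the affine patch `X ≠ 0` of the quartic
`X³Y − X²Y² − X²Z² − XY²Z + XZ³ + Y³Z = 0`. -/
noncomputable abbrev f11 : MvPolynomial (Fin 2) ℤ :=
  yP - yP ^ 2 - zP ^ 2 - yP ^ 2 * zP + zP ^ 3 + yP ^ 3 * zP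

/-- In `R = ℤ[y,z]/(y − y² − z² − y²z + z³ + y³z)`, the ideals `(y, z−1)` and
`(y³, z³)` are comaximal. -/
theorem ideals_comaximal :
    Ideal.span ({Ideal.Quotient.mk (Ideal.span {f11}) yP,
        Ideal.Quotient.mk (Ideal.span {f11}) (zP - 1)} :
      Set (MvPolynomial (Fin 2) ℤ ⧸ Ideal.span {f11})) ⊔
    Ideal.span {Ideal.Quotient.mk (Ideal.span {f11}) (yP ^ 3),
        Ideal.Quotient.mk (Ideal.span {f11}) (zP ^ 3)} = ⊤ := by
  rw [Ideal.eq_top_iff_one]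
  have h1 : Ideal.Quotient.mk (Ideal.span {f11}) (zP - 1) ∈
      Ideal.span ({Ideal.Quotient.mk (Ideal.span {f11}) yP,
        Ideal.Quotient.mk (Ideal.span {f11}) (zP - 1)} :
      Set (MvPolynomial (Fin 2) ℤ ⧸ Ideal.span {f11})) ⊔
    Ideal.span {Ideal.Quotient.mk (Ideal.span {f11}) (yP ^ 3),
        Ideal.Quotient.mk (Ideal.span {f11}) (zP ^ 3)} :=
    Ideal.mem_sup_left (Ideal.subset_span (Or.inr rfl))
  have h2 : Ideal.Quotient.mk (Ideal.span {f11}) (zP ^ 3) ∈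
      Ideal.span ({Ideal.Quotient.mk (Ideal.span {f11}) yP,
        Ideal.Quotient.mk (Ideal.span {f11}) (zP - 1)} :
      Set (MvPolynomial (Fin 2) ℤ ⧸ Ideal.span {f11})) ⊔
    Ideal.span {Ideal.Quotient.mk (Ideal.span {f11}) (yP ^ 3),
        Ideal.Quotient.mk (Ideal.span {f11}) (zP ^ 3)} :=
    Ideal.mem_sup_right (Ideal.subset_span (Or.inr rfl))
  have key : (1 : MvPolynomial (Fin 2) ℤ ⧸ Ideal.span {f11}) =
      Ideal.Quotient.mk (Ideal.span {f11}) (zP ^ 3) -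
      Ideal.Quotient.mk (Ideal.span {f11}) (zP ^ 2 + zP + 1) *
      Ideal.Quotient.mk (Ideal.span {f11}) (zP - 1) := by
    rw [← RingHom.map_mul, ← RingHom.map_sub, ← RingHom.map_one (Ideal.Quotient.mk (Ideal.span {f11}))]
    congr 1
    ring
  rw [key]
  exact sub_mem h2 (Ideal.mul_mem_left _ _ h1)
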